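/- arXiv:2005.01240 — 3 statements merged into one kernel-verified Lean document; each statement's English description precedes it below -/
import Mathlib

section
/- Let A be an n×n positive definite Hermitian matrix. A Hermitian matrix B satisfies det(sA + B) > 0 for all s ≥ 0 if and only if B is positive definite. In other words, the Gårding cone of the determinant at A consists exactly of the positive definite Hermitian matrices. -/
/-!
Write `A = T⋆T` with `T` invertible and put `M = T⁻⋆ B T⁻¹`, so that `sA + B = T⋆(s + M)T`
and `B` is positive definite iff every eigenvalue `λ` of the Hermitian matrix `M` is positive.
An eigenvalue `λ ≤ 0` would give `det(-λA + B) = 0` with `-λ ≥ 0`. Conversely, for `B`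
positive definite and `s ≥ 0`, `sA + B` is positive definite and so has positive determinant.
-/

open Matrix ComplexOrder
open scoped MatrixOrder

lemma Units.smul_star_mul_self_add {R A : Type*} [CommSemiring R] [Ring A] [StarRing A]
    [Algebra R A] (u : Aˣ) (c : R) (b : A) :
    c • (star (u : A) * u) + b = star (u : A) * (c • 1 + star (↑u⁻¹ : A) * b * ↑u⁻¹) * u := by
  rw [mul_add, add_mul, mul_smul_comm, mul_one, smul_mul_assoc, ← mul_assoc, ← mul_assoc,
    ← star_mul, Units.inv_mul, star_one, one_mul, mul_assoc, Units.inv_mul, mul_one]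

namespace Matrix

variable {𝕜 n : Type*} [RCLike 𝕜] [Fintype n] [DecidableEq n]

lemma IsHermitian.det_sub_eigenvalues_smul_one {M : Matrix n n 𝕜} (hM : M.IsHermitian)
    (i : n) : (M - (hM.eigenvalues i : 𝕜) • 1).det = 0 := by
  rw [← exists_mulVec_eq_zero_iff]
  refine ⟨hM.eigenvectorBasis i, ?_, ?_⟩
  · simpa using hM.eigenvectorBasis.orthonormal.ne_zero i
  · rw [sub_mulVec, hM.mulVec_eigenvectorBasis, smul_mulVec, one_mulVec,
      RCLike.real_smul_eq_coe_smul (K := 𝕜), sub_self]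

lemma PosDef.posDef_of_det_smul_add_ne_zero {A B : Matrix n n 𝕜} (hA : A.PosDef)
    (hB : B.IsHermitian) (h : ∀ s : ℝ, 0 ≤ s → ((s : 𝕜) • A + B).det ≠ 0) : B.PosDef := by
  obtain ⟨T, hT, rfl⟩ :=
    CStarAlgebra.isStrictlyPositive_iff_eq_star_mul_self.mp hA.isStrictlyPositive
  lift T to (Matrix n n 𝕜)ˣ using hT
  set M := star (↑T⁻¹ : Matrix n n 𝕜) * B * (↑T⁻¹ : Matrix n n 𝕜)
  have hM : M.IsHermitian := isHermitian_conjTranspose_mul_mul _ hB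
  rw [← (Units.isUnit T⁻¹).posDef_star_left_conjugate_iff, hM.posDef_iff_eigenvalues_pos]
  intro i
  by_contra! hi
  refine h (-hM.eigenvalues i) (neg_nonneg.mpr hi) ?_
  rw [T.smul_star_mul_self_add, det_mul, det_mul, RCLike.ofReal_neg, neg_smul, neg_add_eq_sub,
    hM.det_sub_eigenvalues_smul_one, mul_zero, zero_mul]

end Matrix

/-- for a positive definite Hermitian `A`, a Hermitian matrix `B` satisfies
`det (s A + B) > 0` for all `s ≥ 0` iff `B` is positive definite (the Gårding cone of
`det` at `A` consists of the positive definite Hermitian matrices). -/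
theorem stmt4 (n : ℕ) (A B : Matrix (Fin n) (Fin n) ℂ)
    (hA : A.PosDef) (hB : B.IsHermitian) :
    (∀ s : ℝ, 0 ≤ s →
        0 < ((s : ℂ) • A + B).det.re ∧ ((s : ℂ) • A + B).det.im = 0) ↔ B.PosDef := by
  refine ⟨fun h => hA.posDef_of_det_smul_add_ne_zero hB fun s hs hdet => ?_, fun hB s hs => ?_⟩
  · exact (h s hs).1.ne' (congrArg Complex.re hdet)
  · have hdet : 0 < ((s : ℂ) • A + B).det :=
      (PosDef.posSemidef_add (hA.posSemidef.smul (Complex.zero_le_real.mpr hs)) hB).det_pos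
    exact ⟨(Complex.pos_iff.mp hdet).1, (Complex.pos_iff.mp hdet).2.symm⟩
end

section
/- Let A, B be positive definite n×n Hermitian matrices and define a_k = D(A^{[k]}, B^{[n-k]}), the mixed determinant with A repeated k times and B repeated n−k times. Then a_k² ≥ a_{k-1} a_{k+1} for all 1 ≤ k ≤ n−1. -/
open Matrix ComplexOrder

/-- The mixed determinant (full polarization of `det`, normalized so that
`mixedDet (fun _ => A) = det A`). -/
noncomputable def mixedDet {n : ℕ} (A : Fin n → Matrix (Fin n) (Fin n) ℂ) : ℂ :=
  (n.factorial : ℂ)⁻¹ *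
    ∑ σ : Equiv.Perm (Fin n), Matrix.det (Matrix.of fun i j => A (σ j) i j)

/-! Write `B = Lᴴ L` and let `μᵢ > 0` be the eigenvalues of the positive definite matrix
`M = L⁻ᴴ A L⁻¹`; then `det (x • A + B) = det B * ∏ i, (x * μᵢ + 1)`. On the other hand,
expanding `det (x • A + B)` by multilinearity and using the symmetry of `mixedDet` gives
`∑ k, C(n, k) * a k * x ^ k`. Comparing coefficients, `a k = det B * e_k(μ) / C(n, k)`, so the
claim is Newton's inequality for the elementary symmetric means of the positive reals `μᵢ`. -/

open Finset

namespace Multiset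

section esymm

variable {R : Type*} [CommSemiring R]

theorem esymm_zero (s : Multiset R) : s.esymm 0 = 1 := by
  simp [esymm, powersetCard_zero_left]

theorem esymm_cons_succ (a : R) (s : Multiset R) (k : ℕ) :
    (a ::ₘ s).esymm (k + 1) = s.esymm (k + 1) + a * s.esymm k := by
  simp [esymm, powersetCard_cons, map_map, sum_map_mul_left]

theorem esymm_eq_zero_of_card_lt {s : Multiset R} {k : ℕ} (h : card s < k) : s.esymm k = 0 := by
  simp [esymm, powersetCard_eq_empty _ h]

theorem esymm_nonneg [PartialOrder R] [IsOrderedRing R] {s : Multiset R} (hs : ∀ x ∈ s, 0 ≤ x)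
    (k : ℕ) : 0 ≤ s.esymm k :=
  sum_nonneg fun _ hx => by
    obtain ⟨t, ht, rfl⟩ := mem_map.1 hx
    exact prod_nonneg fun x hx => hs x (subset_of_le (mem_powersetCard.1 ht).1 hx)

theorem esymm_pos [PartialOrder R] [IsStrictOrderedRing R] {s : Multiset R}
    (hs : ∀ x ∈ s, 0 < x) {k : ℕ} (hk : k ≤ card s) : 0 < s.esymm k := by
  induction s using Multiset.induction_on generalizing k with
  | empty => simp_all [esymm_zero]
  | cons a s ih =>
    rcases k with _ | k
    · simp [esymm_zero]
    rw [esymm_cons_succ]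
    have hs' : ∀ x ∈ s, 0 < x := fun x hx => hs x (mem_cons_of_mem hx)
    have := esymm_nonneg (fun x hx => (hs' x hx).le) (k + 1)
    have := mul_pos (hs a (mem_cons_self a s)) (ih hs' (by simpa using hk))
    positivity

end esymm

noncomputable def esymmMean (s : Multiset ℝ) (k : ℕ) : ℝ :=
  s.esymm k / (card s).choose k

theorem esymmMean_zero (s : Multiset ℝ) : s.esymmMean 0 = 1 := by
  simp [esymmMean, esymm_zero]

theorem esymmMean_eq_zero_of_card_lt {s : Multiset ℝ} {k : ℕ} (h : card s < k) :
    s.esymmMean k = 0 := by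
  simp [esymmMean, esymm_eq_zero_of_card_lt h]

theorem esymmMean_nonneg {s : Multiset ℝ} (hs : ∀ x ∈ s, 0 ≤ x) (k : ℕ) : 0 ≤ s.esymmMean k :=
  div_nonneg (esymm_nonneg hs k) (Nat.cast_nonneg _)

theorem esymmMean_pos {s : Multiset ℝ} (hs : ∀ x ∈ s, 0 < x) {k : ℕ} (hk : k ≤ card s) :
    0 < s.esymmMean k :=
  div_pos (esymm_pos hs hk) (Nat.cast_pos.2 (Nat.choose_pos hk))

/-- `k - 1` is truncated, but its coefficient `k` vanishes at `k = 0`. -/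
theorem card_add_one_mul_esymmMean_cons (a : ℝ) (s : Multiset ℝ) (k : ℕ) :
    (card s + 1 : ℝ) * (a ::ₘ s).esymmMean k
      = (card s + 1 - k) * s.esymmMean k + k * a * s.esymmMean (k - 1) := by
  rcases k with _ | k
  · simp [esymmMean_zero]
  simp only [esymmMean, card_cons, esymm_cons_succ, Nat.add_sub_cancel]
  push_cast
  set m := card s
  rcases lt_trichotomy k m with hk | rfl | hk
  · have h₁ : ((m + 1) * m.choose k : ℝ) = (m + 1).choose (k + 1) * (k + 1) := by
      exact_mod_cast Nat.add_one_mul_choose_eq m k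
    have h₂ : (m.choose (k + 1) * (m + 1) : ℝ) = (m + 1).choose (k + 1) * (m - k) := by
      rw [← Nat.cast_sub hk.le, show m - k = m + 1 - (k + 1) by omega]
      exact_mod_cast Nat.choose_mul_succ_eq m (k + 1)
    have : (0 : ℝ) < m.choose k := by exact_mod_cast Nat.choose_pos hk.le
    have : (0 : ℝ) < m.choose (k + 1) := by exact_mod_cast Nat.choose_pos hk
    have : (0 : ℝ) < (m + 1).choose (k + 1) := by exact_mod_cast Nat.choose_pos (by omega)
    field_simp
    linear_combination (s.esymm (k + 1) * m.choose k) * h₂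
      + (a * s.esymm k * m.choose (k + 1)) * h₁
  · simp [esymm_eq_zero_of_card_lt (Nat.lt_succ_self m)]
    ring
  · simp [esymm_eq_zero_of_card_lt hk, esymm_eq_zero_of_card_lt (Nat.lt_succ_of_lt hk)]

/-- The inductive step of Newton's inequalities: `RHS - LHS` equals
`(N-k)(N-k-2)(s²-rt) + k(k+2)a²(r²-qs) + k(N-k-2)a(rs-qt) + (s-ar)²`. The hypotheses on `q`
carry the factor `k` so that at `k = 0`, where `q` stands for a nonexistent mean, they are void. -/
theorem newton_step {N k a q r s t : ℝ} (hk : 0 ≤ k) (hkN : k + 2 ≤ N) (ha : 0 ≤ a)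
    (hrt : r * t ≤ s ^ 2) (hqt : k * (q * t) ≤ k * (r * s)) (hqs : k * (q * s) ≤ k * r ^ 2) :
    ((N - k) * r + k * a * q) * ((N - (k + 2)) * t + (k + 2) * a * s)
      ≤ ((N - (k + 1)) * s + (k + 1) * a * r) ^ 2 := by
  have h₁ : 0 ≤ N - (k + 2) := by linarith
  nlinarith [mul_nonneg (mul_nonneg (by linarith : 0 ≤ N - k) h₁) (sub_nonneg.2 hrt),
    mul_nonneg (mul_nonneg h₁ ha) (sub_nonneg.2 hqt),
    mul_nonneg (mul_nonneg (by linarith : 0 ≤ k + 2) (mul_nonneg ha ha)) (sub_nonneg.2 hqs),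
    sq_nonneg (s - a * r)]

theorem esymmMean_mul_le_mul {s : Multiset ℝ} (hs : ∀ x ∈ s, 0 < x)
    (hlc : ∀ k, s.esymmMean k * s.esymmMean (k + 2) ≤ s.esymmMean (k + 1) ^ 2) (j : ℕ) :
    s.esymmMean j * s.esymmMean (j + 3) ≤ s.esymmMean (j + 1) * s.esymmMean (j + 2) := by
  have hnonneg := esymmMean_nonneg fun x hx => (hs x hx).le
  rcases le_or_gt (j + 3) (card s) with hj | hj
  · have hpos : 0 < s.esymmMean (j + 1) * s.esymmMean (j + 2) :=
      mul_pos (esymmMean_pos hs (by omega)) (esymmMean_pos hs (by omega))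
    refine le_of_mul_le_mul_right ?_ hpos
    linear_combination
      mul_le_mul (hlc j) (hlc (j + 1)) (mul_nonneg (hnonneg _) (hnonneg _)) (sq_nonneg _)
  · rw [esymmMean_eq_zero_of_card_lt hj, mul_zero]
    exact mul_nonneg (hnonneg _) (hnonneg _)

/-- **Newton's inequalities**. -/
theorem esymmMean_mul_le_sq {s : Multiset ℝ} (hs : ∀ x ∈ s, 0 < x) (k : ℕ) :
    s.esymmMean k * s.esymmMean (k + 2) ≤ s.esymmMean (k + 1) ^ 2 := by
  induction s using Multiset.induction_on generalizing k with
  | empty =>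
    rw [esymmMean_eq_zero_of_card_lt (k := k + 2) (by simp), mul_zero]
    exact sq_nonneg _
  | cons a s ih =>
    have hs' : ∀ x ∈ s, 0 < x := fun x hx => hs x (mem_cons_of_mem hx)
    have hlc := ih hs'
    rcases lt_or_ge (card s + 1) (k + 2) with hk | hk
    · rw [esymmMean_eq_zero_of_card_lt (k := k + 2) (by simpa using hk), mul_zero]
      exact sq_nonneg _
    have hrt := hlc k
    have hqt : (k : ℝ) * (s.esymmMean (k - 1) * s.esymmMean (k + 2))
        ≤ k * (s.esymmMean k * s.esymmMean (k + 1)) := by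
      rcases k with _ | j
      · simp
      exact mul_le_mul_of_nonneg_left (esymmMean_mul_le_mul hs' hlc j) (Nat.cast_nonneg _)
    have hqs : (k : ℝ) * (s.esymmMean (k - 1) * s.esymmMean (k + 1)) ≤ k * s.esymmMean k ^ 2 := by
      rcases k with _ | j
      · simp
      exact mul_le_mul_of_nonneg_left (hlc j) (Nat.cast_nonneg _)
    have hstep := newton_step (N := card s + 1) (Nat.cast_nonneg k) (by exact_mod_cast hk)
      (hs a (mem_cons_self a s)).le hrt hqt hqs
    have hrec := card_add_one_mul_esymmMean_cons a s
    have hscaled :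
        ((card s + 1) * (a ::ₘ s).esymmMean k) * ((card s + 1) * (a ::ₘ s).esymmMean (k + 2))
          ≤ ((card s + 1) * (a ::ₘ s).esymmMean (k + 1)) ^ 2 := by
      rw [hrec, hrec, hrec]
      push_cast
      simpa using hstep
    refine le_of_mul_le_mul_left ?_ (by positivity : (0 : ℝ) < (card s + 1) ^ 2)
    linear_combination hscaled

end Multiset

theorem eq_of_forall_sum_mul_pow_eq {K : Type*} [CommRing K] [IsDomain K] [Infinite K] {N : ℕ}
    {c d : ℕ → K} (h : ∀ x, ∑ k ∈ range N, c k * x ^ k = ∑ k ∈ range N, d k * x ^ k) {k : ℕ}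
    (hk : k < N) : c k = d k := by
  open Polynomial in
  have hpoly : ∑ j ∈ range N, C (c j) * X ^ j = ∑ j ∈ range N, C (d j) * X ^ j :=
    Polynomial.funext fun x => by simpa [eval_finsetSum] using h x
  simpa [finsetSum_coeff, coeff_C_mul_X_pow, hk] using congrArg (coeff · k) hpoly

theorem prod_mul_add_one_eq_sum_esymm {R ι : Type*} [CommSemiring R] [Fintype ι] (μ : ι → R)
    (x : R) :
    ∏ i, (x * μ i + 1) = ∑ k ∈ range (Fintype.card ι + 1), (univ.val.map μ).esymm k * x ^ k := by
  classical
  rw [prod_add_one, sum_powerset, card_univ]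
  refine sum_congr rfl fun k _ => ?_
  rw [Finset.esymm_map_val, sum_mul]
  refine sum_congr rfl fun t ht => ?_
  rw [prod_mul_distrib, prod_const, (mem_powersetCard.1 ht).2, mul_comm]

namespace Matrix

variable {ι : Type*} [Fintype ι] [DecidableEq ι]

theorem det_smul_add_eq_sum_piecewise {R : Type*} [CommRing R] (A B : Matrix ι ι R) (x : R) :
    det (x • A + B) = ∑ S : Finset ι, x ^ #S * det (S.piecewise A B) := by
  change detRowAlternating ((fun i => x • A i) + fun i => B i) = _
  rw [AlternatingMap.map_add_univ]
  refine sum_congr rfl fun S _ => ?_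
  have : S.piecewise (fun i => x • A i) (fun i => B i)
      = fun i => (if i ∈ S then x else 1) • S.piecewise A B i := by
    ext i j
    by_cases hi : i ∈ S <;> simp [hi, Finset.piecewise]
  rw [this, AlternatingMap.map_smul_univ, Fintype.prod_ite_mem, prod_const, smul_eq_mul]
  rfl

theorem IsHermitian.det_smul_add_one {𝕜 : Type*} [RCLike 𝕜] {M : Matrix ι ι 𝕜}
    (hM : M.IsHermitian) (x : 𝕜) : det (x • M + 1) = ∏ i, (x * hM.eigenvalues i + 1) := by
  have hdiag : x • diagonal (RCLike.ofReal ∘ hM.eigenvalues) + 1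
      = diagonal fun i => x * hM.eigenvalues i + 1 := by
    ext i j
    by_cases h : i = j <;> simp [h]
  conv_lhs => rw [hM.spectral_theorem,
    ← map_one (Unitary.conjStarAlgAut 𝕜 _ hM.eigenvectorUnitary), ← map_smul, ← map_add, hdiag,
    Unitary.conjStarAlgAut_apply, det_mul_comm, ← mul_assoc, Unitary.coe_star_mul_self, one_mul,
    det_diagonal]

open scoped MatrixOrder in
theorem PosDef.exists_det_smul_add_eq {𝕜 : Type*} [RCLike 𝕜] {A B : Matrix ι ι 𝕜}
    (hA : A.PosDef) (hB : B.PosDef) :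
    ∃ μ : ι → ℝ, (∀ i, 0 < μ i) ∧ ∀ x : 𝕜, det (x • A + B) = det B * ∏ i, (x * μ i + 1) := by
  obtain ⟨L, rfl⟩ := CStarAlgebra.nonneg_iff_eq_star_mul_self.mp hB.posSemidef.nonneg
  have hL : IsUnit L.det := by
    have := (isUnit_iff_isUnit_det _).mp hB.isUnit
    rw [det_mul] at this
    exact isUnit_of_mul_isUnit_right this
  set M := star L⁻¹ * A * L⁻¹
  have hM : M.PosDef := (isUnit_nonsing_inv_iff.mpr ((isUnit_iff_isUnit_det L).mpr hL)
    ).posDef_star_left_conjugate_iff.mpr hA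
  refine ⟨hM.1.eigenvalues, hM.eigenvalues_pos, fun x => ?_⟩
  have hfac : x • A + star L * L = star L * (x • M + 1) * L := by
    have h : star L * star L⁻¹ = 1 := by rw [← star_mul, nonsing_inv_mul L hL, star_one]
    simp only [M, mul_add, add_mul, Matrix.mul_smul, Matrix.smul_mul, ← Matrix.mul_assoc, h,
      Matrix.one_mul, Matrix.mul_one]
    rw [Matrix.mul_assoc, nonsing_inv_mul L hL, Matrix.mul_one]
  rw [hfac, det_mul, det_mul, hM.1.det_smul_add_one, det_mul]
  ring

end Matrix

section MixedDet

variable {n : ℕ}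

theorem mixedDet_comp_perm (M : Fin n → Matrix (Fin n) (Fin n) ℂ) (τ : Equiv.Perm (Fin n)) :
    mixedDet (M ∘ τ) = mixedDet M := by
  unfold mixedDet
  congr 1
  exact Equiv.sum_comp (Equiv.mulLeft τ) fun σ : Equiv.Perm (Fin n) =>
    det (of fun i j => M (σ j) i j)

theorem mixedDet_ite_eq_of_card_eq (A B : Matrix (Fin n) (Fin n) ℂ) {S T : Finset (Fin n)}
    (h : #S = #T) :
    mixedDet (fun i => if i ∈ S then A else B) = mixedDet (fun i => if i ∈ T then A else B) := by
  let e : {i // i ∈ T} ≃ {i // i ∈ S} := Fintype.equivOfCardEq (by simp [h])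
  rw [← mixedDet_comp_perm _ e.extendSubtype]
  congr 1
  funext i
  by_cases hi : i ∈ T
  · simp [hi, e.extendSubtype_mem i hi]
  · simp [hi, e.extendSubtype_not_mem i hi]

theorem det_smul_add_eq_sum_mixedDet (A B : Matrix (Fin n) (Fin n) ℂ) (x : ℂ) :
    det (x • A + B)
      = ∑ T : Finset (Fin n), x ^ #T * mixedDet (fun i => if i ∈ T then A else B) := by
  -- each permutation term of `mixedDet` is the column expansion of `det (x • A + B)`, reindexed
  have hσ : ∀ σ : Equiv.Perm (Fin n),
      ∑ T : Finset (Fin n), x ^ #T * det (of fun i j => (if σ j ∈ T then A else B) i j)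
        = det (x • A + B) := by
    intro σ
    rw [← det_transpose, transpose_add, transpose_smul, det_smul_add_eq_sum_piecewise,
      ← (Equiv.finsetCongr σ).sum_comp]
    refine sum_congr rfl fun S _ => ?_
    rw [← det_transpose]
    congr 2
    · simp
    · ext i j
      by_cases hi : i ∈ S <;> simp [Finset.piecewise, hi]
  calc det (x • A + B) = (n.factorial : ℂ)⁻¹ * ∑ _σ : Equiv.Perm (Fin n), det (x • A + B) := by
        rw [sum_const, card_univ, Fintype.card_perm, Fintype.card_fin, nsmul_eq_mul, ← mul_assoc,
          inv_mul_cancel₀ (by positivity), one_mul]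
    _ = (n.factorial : ℂ)⁻¹ * ∑ σ : Equiv.Perm (Fin n), ∑ T : Finset (Fin n),
          x ^ #T * det (of fun i j => (if σ j ∈ T then A else B) i j) := by
        rw [sum_congr rfl fun σ _ => hσ σ]
    _ = _ := by
        rw [sum_comm, mul_sum]
        refine sum_congr rfl fun T _ => ?_
        rw [mixedDet, ← mul_sum, mul_left_comm]

theorem det_smul_add_eq_sum_choose_mul_mixedDet (A B : Matrix (Fin n) (Fin n) ℂ) (x : ℂ) :
    det (x • A + B) = ∑ k ∈ range (n + 1),
      n.choose k * mixedDet (fun i : Fin n => if (i : ℕ) < k then A else B) * x ^ k := by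
  have hcard : ∀ T : Finset (Fin n), mixedDet (fun i => if i ∈ T then A else B)
      = mixedDet (fun i : Fin n => if (i : ℕ) < #T then A else B) := by
    intro T
    rw [mixedDet_ite_eq_of_card_eq A B (T := {i : Fin n | (i : ℕ) < #T})]
    · simp
    · rw [Fin.card_filter_val_lt, min_eq_right]
      simpa using card_le_univ T
  simp only [det_smul_add_eq_sum_mixedDet, hcard]
  rw [← powerset_univ, sum_powerset_apply_card
    (fun k => x ^ k * mixedDet (fun i : Fin n => if (i : ℕ) < k then A else B)), card_univ,
    Fintype.card_fin]
  refine sum_congr rfl fun k _ => ?_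
  rw [nsmul_eq_mul]
  ring

theorem exists_mixedDet_eq_det_mul_esymmMean {A B : Matrix (Fin n) (Fin n) ℂ} (hA : A.PosDef)
    (hB : B.PosDef) : ∃ μ : Fin n → ℝ, (∀ i, 0 < μ i) ∧ ∀ k ≤ n,
      mixedDet (fun i : Fin n => if (i : ℕ) < k then A else B)
        = det B * ((univ.val.map μ).esymmMean k : ℂ) := by
  obtain ⟨μ, hμ, hdet⟩ := hA.exists_det_smul_add_eq hB
  rw [RCLike.ofReal_eq_complex_ofReal] at hdet
  refine ⟨μ, hμ, fun k hk => ?_⟩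
  have hesymm : ∀ j,
      (univ.val.map fun i => (μ i : ℂ)).esymm j = ((univ.val.map μ).esymm j : ℂ) := by
    intro j
    simp only [Finset.esymm_map_val, Complex.ofReal_sum, Complex.ofReal_prod]
  have hcoeff := eq_of_forall_sum_mul_pow_eq (N := n + 1)
    (c := fun k => n.choose k * mixedDet (fun i : Fin n => if (i : ℕ) < k then A else B))
    (d := fun k => det B * ((univ.val.map μ).esymm k : ℂ)) (fun x => by
      rw [← det_smul_add_eq_sum_choose_mul_mixedDet, hdet, prod_mul_add_one_eq_sum_esymm,
        Fintype.card_fin, mul_sum]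
      simp only [hesymm, mul_assoc]) (Nat.lt_succ_of_le hk)
  have hchoose : (n.choose k : ℂ) ≠ 0 := Nat.cast_ne_zero.2 (Nat.choose_pos hk).ne'
  rw [Multiset.esymmMean, Multiset.card_map, card_val, card_univ, Fintype.card_fin]
  push_cast
  field_simp
  linear_combination hcoeff

end MixedDet

/-- for positive definite Hermitian `A, B`, the mixed determinants
`a_k = D(A^{[k]}, B^{[n-k]})` form a log-concave sequence: `a_k² ≥ a_{k-1} a_{k+1}`. -/
theorem stmt16 (n : ℕ) (A B : Matrix (Fin n) (Fin n) ℂ) (hA : A.PosDef) (hB : B.PosDef) :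
    let a : ℕ → ℝ := fun k =>
      (mixedDet (fun i : Fin n => if (i : ℕ) < k then A else B)).re
    ∀ k, 1 ≤ k → k + 1 ≤ n → a (k - 1) * a (k + 1) ≤ a k ^ 2 := by
  intro a k hk hkn
  obtain ⟨μ, hμ, hmix⟩ := exists_mixedDet_eq_det_mul_esymmMean hA hB
  obtain ⟨β, -, hβB⟩ := RCLike.pos_iff_exists_ofReal.1 hB.det_pos
  rw [RCLike.ofReal_eq_complex_ofReal] at hβB
  have ha : ∀ j ≤ n, a j = β * (univ.val.map μ).esymmMean j := fun j hj => by
    simp only [a, hmix j hj, ← hβB]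
    norm_cast
  obtain ⟨j, rfl⟩ : ∃ j, k = j + 1 := ⟨k - 1, by omega⟩
  have hnewton := Multiset.esymmMean_mul_le_sq (s := univ.val.map μ) (by simpa using hμ) j
  rw [Nat.add_sub_cancel, ha j (by omega), ha (j + 1 + 1) (by omega), ha (j + 1) (by omega)]
  calc β * (univ.val.map μ).esymmMean j * (β * (univ.val.map μ).esymmMean (j + 2))
      = β ^ 2 * ((univ.val.map μ).esymmMean j * (univ.val.map μ).esymmMean (j + 2)) := by ring
    _ ≤ β ^ 2 * (univ.val.map μ).esymmMean (j + 1) ^ 2 := by gcongr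
    _ = (β * (univ.val.map μ).esymmMean (j + 1)) ^ 2 := by ring
end

section
/- Let V be a finite-dimensional complex vector space with Hermitian form Q and η with Q(η,η) > 0. Suppose V = (⊕_{s=1}^{p} V_s) ⊕ ℂη is a Q-orthogonal decomposition such that (−1)^s Q is positive semidefinite on each V_s and definite on each V_s. If some V_s with s even is nonzero, then there exists γ ∈ V with Q(η,γ)·conj(Q(η,γ)) < Q(η,η)·Q(γ,γ). -/
/-! A nonzero `β` in an even-index piece has `Q(β,β) > 0` and is orthogonal to `η`, so `γ = η + β`
has `Q(η,γ) = Q(η,η)` while `Q(γ,γ) = Q(η,η) + Q(β,β)` exceeds `Q(η,η)`. -/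

open RCLike ComplexConjugate

namespace LinearMap.IsSymm

variable {𝕜 V : Type*} [RCLike 𝕜] [AddCommGroup V] [Module 𝕜 V] {Q : V →ₗ⋆[𝕜] V →ₗ[𝕜] 𝕜}

lemma im_apply_self (hQ : Q.IsSymm) (x : V) : im (Q x x) = 0 :=
  conj_eq_iff_im.mp (isSymm_def.mp hQ x x)

lemma apply_add_add_of_apply_eq_zero (hQ : Q.IsSymm) {x y : V} (hxy : Q x y = 0) :
    Q (x + y) (x + y) = Q x x + Q y y := by
  have hyx : Q y x = 0 := hQ.eq_iff.mp hxy
  simp only [map_add, add_apply, hxy, hyx, add_zero, zero_add]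

theorem re_mul_conj_lt_re_mul_of_apply_eq_zero (hQ : Q.IsSymm) {η β : V}
    (hη : 0 < re (Q η η)) (hηβ : Q η β = 0) (hβ : 0 < re (Q β β)) :
    re (Q η (η + β) * conj (Q η (η + β))) < re (Q η η * Q (η + β) (η + β)) := by
  have hηγ : Q η (η + β) = Q η η := by rw [map_add, hηβ, add_zero]
  rw [hηγ, hQ.apply_add_add_of_apply_eq_zero hηβ]
  simp only [mul_re, map_add, conj_re, conj_im, hQ.im_apply_self]
  nlinarith

end LinearMap.IsSymm

theorem stmt18_general (V : Type*) [AddCommGroup V] [Module ℂ V]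
    (Q : V →ₗ⋆[ℂ] V →ₗ[ℂ] ℂ) (hherm : ∀ x y, (starRingEnd ℂ) (Q x y) = Q y x)
    (η : V) (hη : 0 < (Q η η).re)
    (p : ℕ) (W : ℕ → Submodule ℂ V)
    (horthη : ∀ s, 1 ≤ s → s ≤ p → ∀ v ∈ W s, Q η v = 0)
    (hdef : ∀ s, 1 ≤ s → s ≤ p → ∀ v ∈ W s, v ≠ 0 → 0 < (((-1 : ℂ) ^ s) * Q v v).re)
    (hnonzero : ∃ s, 1 ≤ s ∧ s ≤ p ∧ Even s ∧ W s ≠ ⊥) :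
    ∃ γ : V, (Q η γ * (starRingEnd ℂ) (Q η γ)).re < (Q η η * Q γ γ).re := by
  obtain ⟨s, hs1, hsp, hs_even, hW⟩ := hnonzero
  obtain ⟨β, hβW, hβ0⟩ := (Submodule.ne_bot_iff _).mp hW
  have hβ : 0 < (Q β β).re := by
    simpa only [hs_even.neg_one_pow, one_mul] using hdef s hs1 hsp β hβW hβ0
  exact ⟨η + β, LinearMap.isSymm_def.mpr hherm |>.re_mul_conj_lt_re_mul_of_apply_eq_zero hη
    (horthη s hs1 hsp β hβW) hβ⟩

/-- if a Hermitian form `Q` with `Q(η,η) > 0` admits a `Q`-orthogonal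
decomposition `V = (⊕_{s=1}^p V_s) ⊕ ℂη` with `(-1)^s Q` positive definite on each
`V_s`, and some `V_s` with `s` even is nonzero, then there is `γ` violating the
Khovanskii–Teissier inequality: `Q(η,γ) conj(Q(η,γ)) < Q(η,η) Q(γ,γ)`. -/
theorem stmt18 (V : Type*) [AddCommGroup V] [Module ℂ V] [FiniteDimensional ℂ V]
    (Q : V →ₗ⋆[ℂ] V →ₗ[ℂ] ℂ) (hherm : ∀ x y, (starRingEnd ℂ) (Q x y) = Q y x)
    (η : V) (hη : 0 < (Q η η).re)
    (p : ℕ) (W : ℕ → Submodule ℂ V)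
    (horthW : ∀ s t, 1 ≤ s → s ≤ p → 1 ≤ t → t ≤ p → s ≠ t →
      ∀ v ∈ W s, ∀ w ∈ W t, Q v w = 0)
    (horthη : ∀ s, 1 ≤ s → s ≤ p → ∀ v ∈ W s, Q η v = 0)
    (hdef : ∀ s, 1 ≤ s → s ≤ p → ∀ v ∈ W s, v ≠ 0 → 0 < (((-1 : ℂ) ^ s) * Q v v).re)
    (hspan : (⨆ s ∈ Set.Icc 1 p, W s) ⊔ Submodule.span ℂ {η} = ⊤)
    (hnonzero : ∃ s, 1 ≤ s ∧ s ≤ p ∧ Even s ∧ W s ≠ ⊥) :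
    ∃ γ : V, (Q η γ * (starRingEnd ℂ) (Q η γ)).re < (Q η η * Q γ γ).re :=
  stmt18_general V Q hherm η hη p W horthη hdef hnonzero
end
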